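/- Let p : E → B be a covering map with B path-connected, locally path-connected, and semi-locally simply connected, and let b ∈ B. Then the monodromy action of π₁(B, b) on the fiber p⁻¹(b) determines the covering up to isomorphism: two coverings of B are isomorphic if and only if their monodromy representations on the fibers are isomorphic as π₁(B, b)-sets. -/

import Mathlib

open unitInterval

/-- `X` is semi-locally simply connected: every point has a neighbourhood in which every
loop at that point is null-homotopic in `X`. -/
def SemiLocallySimplyConnected (X : Type*) [TopologicalSpace X] : Prop :=
  ∀ x : X, ∃ U ∈ nhds x, ∀ γ : Path x x, (∀ t, γ t ∈ U) → γ.Homotopic (Path.refl x)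

/-- `Transports p γ e e'`: the (unique) lift of the path `γ` through `p` starting at `e`
ends at `e'`.  This encodes the monodromy action on fibers. -/
def Transports {E B : Type*} [TopologicalSpace E] [TopologicalSpace B]
    (p : E → B) {b b' : B} (γ : Path b b') (e e' : E) : Prop :=
  ∃ Γ : C(I, E), Γ 0 = e ∧ Γ 1 = e' ∧ ∀ t, p (Γ t) = γ t

/-!
Fix a path `δ` from `b` to `p₁ e`. Lifting `δ` backwards from `e` lands at some `f` in the fiber
over `b`; send `e` to the endpoint of the lift of `δ` starting at `ψ f`. Two choices of `δ` differ
by a loop at `b`, and equivariance of `ψ` says exactly that the result does not depend on the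
choice. The resulting map commutes with path lifting; by local path-connectedness of `B` it agrees
near every point with a local section of `p₂` composed with `p₁`, hence is continuous. The same
construction applied to `ψ⁻¹` gives its inverse, because a map commuting with path lifting is
determined by its values on one fiber when `B` is path-connected.
-/

section Transports

variable {E B : Type*} [TopologicalSpace E] [TopologicalSpace B] {p : E → B}
  {x y z : B} {e e' e'' : E}

namespace Transports

lemma proj_eq_source {γ : Path x y} (h : Transports p γ e e') : p e = x := by
  obtain ⟨Γ, h0, -, hΓ⟩ := h
  rw [← h0, hΓ 0, γ.source]

lemma proj_eq_target {γ : Path x y} (h : Transports p γ e e') : p e' = y := by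
  obtain ⟨Γ, -, h1, hΓ⟩ := h
  rw [← h1, hΓ 1, γ.target]

protected lemma refl (he : p e = x) : Transports p (Path.refl x) e e :=
  ⟨ContinuousMap.const I e, rfl, rfl, fun _ => he⟩

protected lemma symm {γ : Path x y} (h : Transports p γ e e') : Transports p γ.symm e' e := by
  obtain ⟨Γ, h0, h1, hΓ⟩ := h
  exact ⟨Γ.comp ⟨σ, continuous_symm⟩, by simpa using h1, by simpa using h0,
    fun t => hΓ (σ t)⟩

protected lemma trans {γ : Path x y} {γ' : Path y z} (h : Transports p γ e e')
    (h' : Transports p γ' e' e'') : Transports p (γ.trans γ') e e'' := by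
  obtain ⟨Γ, h0, h1, hΓ⟩ := h
  obtain ⟨Γ', h0', h1', hΓ'⟩ := h'
  refine ⟨(Path.trans ⟨Γ, h0, h1⟩ ⟨Γ', h0', h1'⟩).toContinuousMap, by simp, by simp, fun t => ?_⟩
  simp only [Path.coe_toContinuousMap, Path.trans_apply]
  split
  exacts [hΓ _, hΓ' _]

lemma map {E' : Type*} [TopologicalSpace E'] {q : E' → B} {f : E → E'} (hf : Continuous f)
    (hqf : ∀ e, q (f e) = p e) {γ : Path x y} (h : Transports p γ e e') :
    Transports q γ (f e) (f e') := by
  obtain ⟨Γ, h0, h1, hΓ⟩ := h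
  exact ⟨(ContinuousMap.mk f hf).comp Γ, by simp [h0], by simp [h1], fun t => (hqf _).trans (hΓ t)⟩

end Transports

lemma OpenPartialHomeomorph.transports_symm (P : OpenPartialHomeomorph E B) (γ : Path x y)
    (hγ : ∀ t, γ t ∈ P.target) : Transports P γ (P.symm x) (P.symm y) :=
  ⟨⟨fun t => P.symm (γ t), P.continuousOn_symm.comp_continuous γ.continuous hγ⟩,
    by simp, by simp, fun t => P.right_inv (hγ t)⟩

namespace IsCoveringMap

variable (hp : IsCoveringMap p)
include hp

lemma exists_transports (γ : Path x y) (he : p e = x) : ∃ e', Transports p γ e e' := by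
  obtain ⟨Γ, hΓ, hΓ0⟩ := hp.exists_path_lifts γ.toContinuousMap e (by simp [he])
  exact ⟨Γ 1, Γ, hΓ0, rfl, fun t => congr_fun hΓ t⟩

lemma transports_target_unique {γ : Path x y} {e₁ e₂ : E} (h₁ : Transports p γ e e₁)
    (h₂ : Transports p γ e e₂) : e₁ = e₂ := by
  obtain ⟨Γ, g0, g1, gp⟩ := h₁
  obtain ⟨Δ, d0, d1, dp⟩ := h₂
  have := hp.eq_of_comp_eq Γ.continuous Δ.continuous
    (funext fun t => by simp only [Function.comp_apply, gp t, dp t]) 0 (g0.trans d0.symm)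
  rw [← g1, ← d1, this]

lemma transports_source_unique {γ : Path x y} {e₁ e₂ : E} (h₁ : Transports p γ e₁ e)
    (h₂ : Transports p γ e₂ e) : e₁ = e₂ :=
  hp.transports_target_unique h₁.symm h₂.symm

end IsCoveringMap

end Transports

section Monodromy

variable {B E E₁ E₂ E₃ : Type*} [TopologicalSpace B] [TopologicalSpace E] [TopologicalSpace E₁]
  [TopologicalSpace E₂] [TopologicalSpace E₃] {p : E → B} {p₁ : E₁ → B} {p₂ : E₂ → B}
  {p₃ : E₃ → B} {b : B}

def PreservesTransports (p₁ : E₁ → B) (p₂ : E₂ → B) (φ : E₁ → E₂) : Prop :=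
  ∀ {x y : B} (γ : Path x y) (e e' : E₁), Transports p₁ γ e e' → Transports p₂ γ (φ e) (φ e')

def MonodromyEquivariant (p₁ : E₁ → B) (p₂ : E₂ → B) (b : B)
    (ψ : p₁ ⁻¹' {b} → p₂ ⁻¹' {b}) : Prop :=
  ∀ (γ : Path b b) (e e' : p₁ ⁻¹' {b}), Transports p₁ γ e e' → Transports p₂ γ (ψ e) (ψ e')

lemma preservesTransports_of_continuous {φ : E₁ → E₂} (hφ : Continuous φ)
    (hp : ∀ e, p₂ (φ e) = p₁ e) : PreservesTransports p₁ p₂ φ :=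
  fun _ _ _ => Transports.map hφ hp

namespace PreservesTransports

variable {φ : E₁ → E₂}

lemma comp {χ : E₂ → E₃} (hχ : PreservesTransports p₂ p₃ χ) (hφ : PreservesTransports p₁ p₂ φ) :
    PreservesTransports p₁ p₃ (χ ∘ φ) :=
  fun γ e e' h => hχ γ _ _ (hφ γ e e' h)

lemma proj_eq (hφ : PreservesTransports p₁ p₂ φ) (e : E₁) : p₂ (φ e) = p₁ e :=
  (hφ _ e e (.refl rfl)).proj_eq_source

/-- Near `e`, `φ` agrees with `Q.symm ∘ p₁` for a local inverse `Q.symm` of `p₂` at `φ e`: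
points of the sheet of `p₁` through `e` are reached from `e` by lifting paths in a path-connected
neighbourhood of `p₁ e`. -/
lemma continuous [LocallyPathConnectedSpace B] (h₁ : IsLocalHomeomorph p₁)
    (h₂ : IsCoveringMap p₂) (hφ : PreservesTransports p₁ p₂ φ) : Continuous φ := by
  refine continuous_iff_continuousAt.mpr fun e => ?_
  have hpe := hφ.proj_eq e
  obtain ⟨P, heP, rfl⟩ := h₁ e
  obtain ⟨Q, heQ, rfl⟩ := h₂.isLocalHomeomorph (φ e)
  have hPe : P e ∈ Q.target := hpe ▸ Q.map_source heQ
  obtain ⟨U, ⟨hU, hUconn⟩, hUsub⟩ := (path_connected_basis (P e)).mem_iff.mp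
    (Filter.inter_mem (P.open_target.mem_nhds (P.map_source heP)) (Q.open_target.mem_nhds hPe))
  have hφ_eq : ∀ e' ∈ P.source ∩ P ⁻¹' U, φ e' = Q.symm (P e') := by
    rintro e' ⟨he'P, he'U⟩
    obtain ⟨β, hβ⟩ := hUconn.joinedIn _ (mem_of_mem_nhds hU) _ he'U
    have hP : Transports P β e e' := by
      simpa only [P.left_inv heP, P.left_inv he'P] using
        P.transports_symm β fun t => (hUsub (hβ t)).1
    have hQ : Transports Q β (φ e) (Q.symm (P e')) := by
      simpa only [← hpe, Q.left_inv heQ] using Q.transports_symm β fun t => (hUsub (hβ t)).2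
    exact h₂.transports_target_unique (hφ β e e' hP) hQ
  have hnhds : P.source ∩ P ⁻¹' U ∈ nhds e :=
    Filter.inter_mem (P.open_source.mem_nhds heP) (P.continuousAt heP hU)
  exact ((Q.continuousAt_symm hPe).comp (P.continuousAt heP)).congr
    (Filter.eventuallyEq_of_mem hnhds hφ_eq).symm

lemma eq_id_of_eqOn_fiber [PathConnectedSpace B] (hp : IsCoveringMap p)
    {θ : E → E} (hθ : PreservesTransports p p θ) (hb : Set.EqOn θ id (p ⁻¹' {b})) : θ = id := by
  funext e
  obtain ⟨f, hf⟩ := hp.exists_transports (PathConnectedSpace.somePath (p e) b) rfl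
  have hθf : Transports p _ (θ e) f := hb hf.proj_eq_target ▸ hθ _ e f hf
  exact hp.transports_source_unique hθf hf

end PreservesTransports

lemma MonodromyEquivariant.symm (h₁ : IsCoveringMap p₁) (h₂ : IsCoveringMap p₂)
    {ψ : p₁ ⁻¹' {b} ≃ p₂ ⁻¹' {b}} (hψ : MonodromyEquivariant p₁ p₂ b ψ) :
    MonodromyEquivariant p₂ p₁ b ψ.symm := by
  intro γ f f' hT
  obtain ⟨g, hg⟩ := h₁.exists_transports γ (ψ.symm f).2
  have hgψ : ψ ⟨g, hg.proj_eq_target⟩ = f' :=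
    Subtype.ext <| h₂.transports_target_unique (by simpa using hψ γ _ ⟨g, _⟩ hg) hT
  rwa [← hgψ, Equiv.symm_apply_apply]

def MonodromyRel (p₁ : E₁ → B) (p₂ : E₂ → B) (ψ : p₁ ⁻¹' {b} → p₂ ⁻¹' {b}) (e : E₁)
    (g : E₂) : Prop :=
  ∃ (x : B) (δ : Path b x) (f : p₁ ⁻¹' {b}), Transports p₁ δ f e ∧ Transports p₂ δ (ψ f) g

namespace MonodromyRel

variable {ψ : p₁ ⁻¹' {b} → p₂ ⁻¹' {b}}

lemma exists_right [PathConnectedSpace B] (h₁ : IsCoveringMap p₁) (h₂ : IsCoveringMap p₂)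
    (e : E₁) : ∃ g, MonodromyRel p₁ p₂ ψ e g := by
  let δ := PathConnectedSpace.somePath b (p₁ e)
  obtain ⟨f, hf⟩ := h₁.exists_transports δ.symm rfl
  obtain ⟨g, hg⟩ := h₂.exists_transports δ (ψ ⟨f, hf.proj_eq_target⟩).2
  exact ⟨g, _, δ, ⟨f, hf.proj_eq_target⟩, by simpa using hf.symm, hg⟩

/-- Two witnesses differ by the loop `δ.trans δ'.symm` at `b`, which `ψ` respects. -/
lemma right_unique (h₂ : IsCoveringMap p₂) (hψ : MonodromyEquivariant p₁ p₂ b ψ) {e : E₁}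
    {g g' : E₂} (hg : MonodromyRel p₁ p₂ ψ e g) (hg' : MonodromyRel p₁ p₂ ψ e g') : g = g' := by
  obtain ⟨x, δ, f, hf, hδ⟩ := hg
  obtain ⟨x', δ', f', hf', hδ'⟩ := hg'
  obtain rfl : x = x' := hf.proj_eq_target.symm.trans hf'.proj_eq_target
  have hloop := hψ _ f f' (hf.trans hf'.symm)
  obtain ⟨w, hw⟩ := h₂.exists_transports δ'.symm hδ.proj_eq_target
  have hw' : w = ψ f' := h₂.transports_target_unique (hδ.trans hw) hloop
  subst hw'
  exact h₂.transports_source_unique hw hδ'.symm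

lemma proj_eq {e : E₁} {g : E₂} (hg : MonodromyRel p₁ p₂ ψ e g) : p₂ g = p₁ e := by
  obtain ⟨x, δ, f, hf, hδ⟩ := hg
  rw [hf.proj_eq_target, hδ.proj_eq_target]

lemma trans {x y : B} {γ : Path x y} {e e' : E₁} {g g' : E₂} (hg : MonodromyRel p₁ p₂ ψ e g)
    (he : Transports p₁ γ e e') (hg' : Transports p₂ γ g g') : MonodromyRel p₁ p₂ ψ e' g' := by
  obtain ⟨x₀, δ, f, hf, hδ⟩ := hg
  obtain rfl : x₀ = x := hf.proj_eq_target.symm.trans he.proj_eq_source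
  exact ⟨y, δ.trans γ, f, hf.trans he, hδ.trans hg'⟩

end MonodromyRel

lemma MonodromyEquivariant.exists_extension [PathConnectedSpace B] (h₁ : IsCoveringMap p₁)
    (h₂ : IsCoveringMap p₂) {ψ : p₁ ⁻¹' {b} → p₂ ⁻¹' {b}} (hψ : MonodromyEquivariant p₁ p₂ b ψ) :
    ∃ φ : E₁ → E₂, PreservesTransports p₁ p₂ φ ∧ ∀ f : p₁ ⁻¹' {b}, φ f = ψ f := by
  choose φ hφ using MonodromyRel.exists_right (ψ := ψ) h₁ h₂
  refine ⟨φ, fun γ e e' he => ?_, fun f => ?_⟩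
  · obtain ⟨g', hg'⟩ := h₂.exists_transports γ ((hφ e).proj_eq.trans he.proj_eq_source)
    rwa [MonodromyRel.right_unique h₂ hψ (hφ e') ((hφ e).trans he hg')]
  · exact MonodromyRel.right_unique h₂ hψ (hφ f)
      ⟨b, .refl b, f, .refl f.2, .refl (ψ f).2⟩

end Monodromy

theorem covering_classified_by_monodromy_general
    {B E₁ E₂ : Type*} [TopologicalSpace B] [TopologicalSpace E₁] [TopologicalSpace E₂]
    [PathConnectedSpace B] [LocallyPathConnectedSpace B]
    (p₁ : E₁ → B) (p₂ : E₂ → B) (h₁ : IsCoveringMap p₁) (h₂ : IsCoveringMap p₂)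
    (b : B) :
    (∃ φ : E₁ ≃ₜ E₂, ∀ e, p₂ (φ e) = p₁ e) ↔
    (∃ ψ : (p₁ ⁻¹' {b}) ≃ (p₂ ⁻¹' {b}),
      ∀ (γ : Path b b) (e e' : p₁ ⁻¹' {b}),
        Transports p₁ γ (e : E₁) (e' : E₁) →
        Transports p₂ γ ((ψ e : E₂)) ((ψ e' : E₂))) := by
  constructor
  · rintro ⟨φ, hφ⟩
    exact ⟨φ.toEquiv.subtypeEquiv fun e => by simp [hφ],
      fun γ e e' => preservesTransports_of_continuous φ.continuous hφ γ e e'⟩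
  · rintro ⟨ψ, hψ⟩
    obtain ⟨φ, hφ, hφψ⟩ := MonodromyEquivariant.exists_extension h₁ h₂ hψ
    obtain ⟨χ, hχ, hχψ⟩ := (MonodromyEquivariant.symm h₁ h₂ hψ).exists_extension h₂ h₁
    have hχφ : χ ∘ φ = id :=
      PreservesTransports.eq_id_of_eqOn_fiber h₁ (hχ.comp hφ) (b := b) fun e he => by
        simpa [hφψ ⟨e, he⟩] using hχψ (ψ ⟨e, he⟩)
    have hφχ : φ ∘ χ = id :=
      PreservesTransports.eq_id_of_eqOn_fiber h₂ (hφ.comp hχ) (b := b) fun e he => by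
        simpa [hχψ ⟨e, he⟩] using hφψ (ψ.symm ⟨e, he⟩)
    refine ⟨⟨⟨φ, χ, congr_fun hχφ, congr_fun hφχ⟩, ?_, ?_⟩, hφ.proj_eq⟩
    · exact hφ.continuous h₁.isLocalHomeomorph h₂
    · exact hχ.continuous h₂.isLocalHomeomorph h₁

/-- for coverings of a path-connected, locally path-connected,
semi-locally simply connected base `B`, the monodromy action of `π₁(B, b)` on the fiber
determines the covering: two coverings are isomorphic (homeomorphic over `B`) if and only
if their fibers over `b` are isomorphic as `π₁(B, b)`-sets, i.e. there is an
equivariant bijection of the fibers intertwining the monodromy (path-lifting) actions. -/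
theorem covering_classified_by_monodromy
    {B E₁ E₂ : Type*} [TopologicalSpace B] [TopologicalSpace E₁] [TopologicalSpace E₂]
    [PathConnectedSpace B] [LocallyPathConnectedSpace B]
    (hB : SemiLocallySimplyConnected B)
    (p₁ : E₁ → B) (p₂ : E₂ → B) (h₁ : IsCoveringMap p₁) (h₂ : IsCoveringMap p₂)
    (b : B) :
    (∃ φ : E₁ ≃ₜ E₂, ∀ e, p₂ (φ e) = p₁ e) ↔
    (∃ ψ : (p₁ ⁻¹' {b}) ≃ (p₂ ⁻¹' {b}),
      ∀ (γ : Path b b) (e e' : p₁ ⁻¹' {b}),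
        Transports p₁ γ (e : E₁) (e' : E₁) →
        Transports p₂ γ ((ψ e : E₂)) ((ψ e' : E₂))) :=
  covering_classified_by_monodromy_general p₁ p₂ h₁ h₂ b
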